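/- Let U ⊆ ℝ⁵ be open, let θ¹ and θ² be smooth ℂ-valued 1-forms on U, and let ψ be a smooth ℝ-valued 1-form on U, such that at every point x ∈ U the five complex covectors θ¹_x, θ²_x, conj(θ¹_x), conj(θ²_x), ψ_x are linearly independent over ℂ in Hom_ℝ(ℝ⁵, ℂ). Suppose there are smooth functions T₁, T₂ : U → ℂ with dθ¹ = −i·ψ∧θ¹ + conj(θ¹)∧θ² and dθ² = −2i·ψ∧θ² + T₁·θ¹∧conj(θ¹) + T₂·θ¹∧θ². Then the Bianchi-type identities hold: (dT₁ + 2i·T₁·ψ) ∧ θ¹ ∧ conj(θ¹) ∧ θ² = 0 and (dT₂ − 2·conj(T₂)·conj(θ²) − i·T₂·ψ) ∧ θ¹ ∧ conj(θ¹) ∧ θ² = 0; equivalently, dT₁ + 2i·T₁·ψ and dT₂ − 2·conj(T₂)·conj(θ²) − i·T₂·ψ are at each point ℂ-linear combinations of θ¹, conj(θ¹), θ². -/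

import Mathlib

/-- Pointwise complex conjugate of a ℂ-valued real-linear covector. -/
noncomputable def conjForm {E : Type*} [NormedAddCommGroup E] [NormedSpace ℝ E]
    (α : E →L[ℝ] ℂ) : E →L[ℝ] ℂ :=
  Complex.conjCLE.toContinuousLinearMap.comp α

/-- A real covector regarded as a ℂ-valued covector. -/
noncomputable def realToC {E : Type*} [NormedAddCommGroup E] [NormedSpace ℝ E]
    (φ : E →L[ℝ] ℝ) : E →L[ℝ] ℂ :=
  Complex.ofRealCLM.comp φ

/-- Exterior derivative of a ℂ-valued 1-form (alternatized Fréchet derivative). -/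
noncomputable def extD {E : Type*} [NormedAddCommGroup E] [NormedSpace ℝ E]
    (α : E → E →L[ℝ] ℂ) (x v w : E) : ℂ :=
  fderiv ℝ (fun y => α y w) x v - fderiv ℝ (fun y => α y v) x w

/-!
Both identities come from `d(dθ¹) = 0` and `d(dθ²) = 0`. Expanding `d` of the right-hand sides of
the structure equations by the Leibniz rule gives, at each point, two identities between 3-forms
whose only unknowns are `dψ`, `dT₁` and `dT₂`. Writing `θ¹ = α¹ + iβ¹`, `θ² = α² + iβ²`, the
independence hypothesis makes `(α¹, β¹, α², β², ψ)` a real coframe, and evaluating the identities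
on a few triples of its dual frame gives scalar equations. Those coming from `d(dθ²) = 0` fix the
components of `dT₁ + 2iT₁ψ` and `dT₂ - 2T̄₂θ̄² - iT₂ψ` along `θ̄²` and `ψ`, once the components of
`dψ` that occur in them are computed from `d(dθ¹) = 0` and the reality of `dψ`.
-/

open Complex ComplexConjugate Filter Module Topology

theorem Module.exists_basis_coord_eq {K V ι : Type*} [Field K] [AddCommGroup V] [Module K V]
    [FiniteDimensional K V] [Fintype ι] [DecidableEq ι] {ρ : ι → Dual K V}
    (hρ : LinearIndependent K ρ) (hcard : Fintype.card ι = finrank K V) :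
    ∃ e : Basis ι K V, e.coord = ρ := by
  let β := basisOfLinearIndependentOfCardEqFinrank' ρ hρ (hcard.trans Subspace.dual_finrank_eq.symm)
  refine ⟨β.dualBasis.map (evalEquiv K V).symm, funext fun i => LinearMap.ext fun v => ?_⟩
  simp [β]

theorem Matrix.det_eq_zero_of_row_zero_eq_sum {R : Type*} [CommRing R] [IsDomain R] {n : ℕ}
    {M : Matrix (Fin (n + 1)) (Fin (n + 1)) R} (c : Fin n → R)
    (h : M 0 = ∑ i, c i • M i.succ) : M.det = 0 := by
  refine exists_vecMul_eq_zero_iff.mp ⟨Fin.cons (-1) c, fun h0 => by simpa using congrFun h0 0, ?_⟩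
  ext j
  simp [vecMul, dotProduct, Fin.sum_univ_succ, h, Finset.sum_apply]

theorem Matrix.det_evaluation_eq_zero_of_eq_combination {R ι : Type*} [CommRing R] [IsDomain R]
    {f0 f1 f2 f3 : ι → R} {c1 c2 c3 : R} (h : ∀ v, f0 v = c1 * f1 v + c2 * f2 v + c3 * f3 v)
    (v1 v2 v3 v4 : ι) :
    det (of fun (i : Fin 4) (j : Fin 4) => ![f0, f1, f2, f3] i (![v1, v2, v3, v4] j)) = 0 :=
  det_eq_zero_of_row_zero_eq_sum ![c1, c2, c3] <| by
    ext j
    simp [Fin.sum_univ_three, h]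

namespace ComplexForms

variable {E : Type*} [NormedAddCommGroup E] [NormedSpace ℝ E]

@[simp] lemma conjForm_apply (α : E →L[ℝ] ℂ) (v : E) : conjForm α v = conj (α v) := rfl

@[simp] lemma realToC_apply (φ : E →L[ℝ] ℝ) (v : E) : realToC φ v = φ v := rfl

lemma _root_.DifferentiableAt.conjForm {α : E → E →L[ℝ] ℂ} {x : E}
    (hα : DifferentiableAt ℝ α x) : DifferentiableAt ℝ (fun y => conjForm (α y)) x :=
  (differentiableAt_const _).clm_comp hα

lemma _root_.DifferentiableAt.realToC {φ : E → E →L[ℝ] ℝ} {x : E}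
    (hφ : DifferentiableAt ℝ φ x) : DifferentiableAt ℝ (fun y => realToC (φ y)) x :=
  (differentiableAt_const _).clm_comp hφ

/- 2- and 3-forms are plain functions, normalised so that `α ∧ β ∧ γ` is a determinant; with this
normalisation, which is the one of `extD`, `d` of a 2-form is the cyclic sum of its derivatives. -/

noncomputable def wedge (α β : E →L[ℝ] ℂ) (v w : E) : ℂ := α v * β w - α w * β v

noncomputable def wedge₂₁ (ω : E → E → ℂ) (α : E →L[ℝ] ℂ) (u v w : E) : ℂ :=
  ω u v * α w + ω v w * α u + ω w u * α v

noncomputable def extD₂ (ω : E → E → E → ℂ) (x u v w : E) : ℂ :=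
  fderiv ℝ (fun y => ω y v w) x u + fderiv ℝ (fun y => ω y w u) x v
    + fderiv ℝ (fun y => ω y u v) x w

/-- `dθ¹ = -iψ ∧ θ¹ + θ̄¹ ∧ θ²`. -/
noncomputable def structureForm₁ (θ1 θ2 : E →L[ℝ] ℂ) (ψ : E →L[ℝ] ℝ) (v w : E) : ℂ :=
  -I * wedge (realToC ψ) θ1 v w + wedge (conjForm θ1) θ2 v w

/-- `dθ² = -2iψ ∧ θ² + T₁ θ¹ ∧ θ̄¹ + T₂ θ¹ ∧ θ²`. -/
noncomputable def structureForm₂ (θ1 θ2 : E →L[ℝ] ℂ) (ψ : E →L[ℝ] ℝ) (T1 T2 : ℂ)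
    (v w : E) : ℂ :=
  -2 * I * wedge (realToC ψ) θ2 v w + T1 * wedge θ1 (conjForm θ1) v w + T2 * wedge θ1 θ2 v w

/-- The exterior derivative of `structureForm₁` by the Leibniz rule, with `dψ = Ψ` and `dθ¹, dθ²`
replaced by the structure forms. -/
noncomputable def dStructureForm₁ (θ1 θ2 : E →L[ℝ] ℂ) (ψ : E →L[ℝ] ℝ) (T1 T2 : ℂ)
    (Ψ : E → E → ℂ) (u v w : E) : ℂ :=
  -I * (wedge₂₁ Ψ θ1 u v w - wedge₂₁ (structureForm₁ θ1 θ2 ψ) (realToC ψ) u v w)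
    + (wedge₂₁ (fun v w => conj (structureForm₁ θ1 θ2 ψ v w)) θ2 u v w
      - wedge₂₁ (structureForm₂ θ1 θ2 ψ T1 T2) (conjForm θ1) u v w)

/-- The same for `structureForm₂`, with `dT₁ = dT1`, `dT₂ = dT2`. -/
noncomputable def dStructureForm₂ (θ1 θ2 : E →L[ℝ] ℂ) (ψ : E →L[ℝ] ℝ) (T1 T2 : ℂ)
    (dT1 dT2 : E →L[ℝ] ℂ) (Ψ : E → E → ℂ) (u v w : E) : ℂ :=
  -2 * I * (wedge₂₁ Ψ θ2 u v w - wedge₂₁ (structureForm₂ θ1 θ2 ψ T1 T2) (realToC ψ) u v w)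
    + (wedge₂₁ (wedge θ1 (conjForm θ1)) dT1 u v w
      + T1 * (wedge₂₁ (structureForm₁ θ1 θ2 ψ) (conjForm θ1) u v w
        - wedge₂₁ (fun v w => conj (structureForm₁ θ1 θ2 ψ v w)) θ1 u v w))
    + (wedge₂₁ (wedge θ1 θ2) dT2 u v w
      + T2 * (wedge₂₁ (structureForm₁ θ1 θ2 ψ) θ2 u v w
        - wedge₂₁ (structureForm₂ θ1 θ2 ψ T1 T2) θ1 u v w))

section Calculus

lemma fderiv_apply_apply {F : Type*} [NormedAddCommGroup F] [NormedSpace ℝ F]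
    {α : E → E →L[ℝ] F} {x : E} (hα : DifferentiableAt ℝ α x) (u v : E) :
    fderiv ℝ (fun y => α y v) x u = fderiv ℝ α x u v := by
  rw [fderiv_clm_apply hα (differentiableAt_const v)]
  simp

lemma extD_eq_fderiv_sub {α : E → E →L[ℝ] ℂ} {x : E} (hα : DifferentiableAt ℝ α x) (v w : E) :
    extD α x v w = fderiv ℝ α x v w - fderiv ℝ α x w v := by
  rw [extD, fderiv_apply_apply hα, fderiv_apply_apply hα]

lemma extD_swap (α : E → E →L[ℝ] ℂ) (x v w : E) : extD α x w v = -extD α x v w :=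
  (neg_sub _ _).symm

lemma extD_conjForm (α : E → E →L[ℝ] ℂ) (x : E) :
    extD (fun y => conjForm (α y)) x = fun v w => conj (extD α x v w) := by
  funext v w
  have h : ∀ a b : E, fderiv ℝ (fun y => conjForm (α y) b) x a =
      conj (fderiv ℝ (fun y => α y b) x a) := fun a b => by
    change fderiv ℝ (fun y => star (α y b)) x a = _
    rw [fderiv_star]
    rfl
  rw [extD, extD, h, h, map_sub]

lemma conj_extD_realToC (φ : E → E →L[ℝ] ℝ) (x v w : E) :
    conj (extD (fun y => realToC (φ y)) x v w) = extD (fun y => realToC (φ y)) x v w := by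
  have h : ∀ y, conjForm (realToC (φ y)) = realToC (φ y) := fun y => by ext; simp
  rw [← congrFun₂ (extD_conjForm (fun y => realToC (φ y)) x) v w]
  simp only [h]

theorem extD₂_extD {α : E → E →L[ℝ] ℂ} {x : E} (hα : ContDiffAt ℝ 2 α x) (u v w : E) :
    extD₂ (extD α) x u v w = 0 := by
  have hdiff : ∀ᶠ y in 𝓝 x, DifferentiableAt ℝ α y :=
    (hα.eventually (by simp)).mono fun y hy => hy.differentiableAt (by simp)
  have hD : DifferentiableAt ℝ (fderiv ℝ α) x :=
    (hα.fderiv_right (m := 1) (by norm_num)).differentiableAt (by simp)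
  have hDb : ∀ b : E, DifferentiableAt ℝ (fun y => fderiv ℝ α y b) x := fun b =>
    hD.clm_apply (differentiableAt_const b)
  have hsymm := hα.isSymmSndFDerivAt (by simp [minSmoothness_of_isRCLikeNormedField])
  have hsecond : ∀ a b c : E, fderiv ℝ (fun y => extD α y b c) x a =
      fderiv ℝ (fderiv ℝ α) x a b c - fderiv ℝ (fderiv ℝ α) x a c b := by
    intro a b c
    have heq : (fun y => extD α y b c) =ᶠ[𝓝 x]
        fun y => fderiv ℝ α y b c - fderiv ℝ α y c b :=
      hdiff.mono fun y hy => extD_eq_fderiv_sub hy b c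
    rw [heq.fderiv_eq, fderiv_fun_sub ((hDb b).clm_apply (differentiableAt_const c))
      ((hDb c).clm_apply (differentiableAt_const b)), sub_apply,
      fderiv_apply_apply (hDb b), fderiv_apply_apply (hDb c), fderiv_apply_apply hD,
      fderiv_apply_apply hD]
  simp only [extD₂, hsecond, hsymm u v, hsymm v w, hsymm w u]
  ring

lemma extD₂_congr {ω ω' : E → E → E → ℂ} {x : E} (h : ∀ᶠ y in 𝓝 x, ω y = ω' y) :
    extD₂ ω x = extD₂ ω' x := by
  have h' : ∀ v w : E, (fun y => ω y v w) =ᶠ[𝓝 x] fun y => ω' y v w := fun v w =>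
    h.mono fun y hy => by simp only [hy]
  ext u v w
  simp only [extD₂, (h' _ _).fderiv_eq]

lemma extD₂_add {ω ω' : E → E → E → ℂ} {x : E}
    (hω : ∀ v w, DifferentiableAt ℝ (fun y => ω y v w) x)
    (hω' : ∀ v w, DifferentiableAt ℝ (fun y => ω' y v w) x) (u v w : E) :
    extD₂ (fun y v w => ω y v w + ω' y v w) x u v w = extD₂ ω x u v w + extD₂ ω' x u v w := by
  simp only [extD₂, fderiv_fun_add (hω _ _) (hω' _ _), add_apply]
  ring

section Leibniz

variable {f : E → ℂ} {β γ : E → E →L[ℝ] ℂ} {x : E}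

lemma differentiableAt_mul_wedge (hf : DifferentiableAt ℝ f x) (hβ : DifferentiableAt ℝ β x)
    (hγ : DifferentiableAt ℝ γ x) (v w : E) :
    DifferentiableAt ℝ (fun y => f y * wedge (β y) (γ y) v w) x := by
  unfold wedge
  fun_prop

lemma fderiv_mul_wedge (hf : DifferentiableAt ℝ f x) (hβ : DifferentiableAt ℝ β x)
    (hγ : DifferentiableAt ℝ γ x) (u v w : E) :
    fderiv ℝ (fun y => f y * wedge (β y) (γ y) v w) x u =
      fderiv ℝ f x u * wedge (β x) (γ x) v w + f x * (fderiv ℝ β x u v * γ x w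
        + β x v * fderiv ℝ γ x u w - fderiv ℝ β x u w * γ x v - β x w * fderiv ℝ γ x u v) := by
  have hβ' : ∀ a, DifferentiableAt ℝ (fun y => β y a) x := fun a =>
    hβ.clm_apply (differentiableAt_const a)
  have hγ' : ∀ a, DifferentiableAt ℝ (fun y => γ y a) x := fun a =>
    hγ.clm_apply (differentiableAt_const a)
  simp only [wedge]
  rw [fderiv_fun_mul hf (by fun_prop), fderiv_fun_sub (by fun_prop) (by fun_prop),
    fderiv_fun_mul (hβ' v) (hγ' w), fderiv_fun_mul (hβ' w) (hγ' v)]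
  simp only [add_apply, smul_apply, sub_apply, fderiv_apply_apply hβ, fderiv_apply_apply hγ,
    smul_eq_mul]
  ring

/-- The Leibniz rule `d(f β ∧ γ) = df ∧ β ∧ γ + f (dβ ∧ γ - β ∧ dγ)`. -/
theorem extD₂_mul_wedge (hf : DifferentiableAt ℝ f x) (hβ : DifferentiableAt ℝ β x)
    (hγ : DifferentiableAt ℝ γ x) (u v w : E) :
    extD₂ (fun y v w => f y * wedge (β y) (γ y) v w) x u v w =
      wedge₂₁ (wedge (β x) (γ x)) (fderiv ℝ f x) u v w
        + f x * (wedge₂₁ (extD β x) (γ x) u v w - wedge₂₁ (extD γ x) (β x) u v w) := by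
  rw [extD₂, fderiv_mul_wedge hf hβ hγ, fderiv_mul_wedge hf hβ hγ, fderiv_mul_wedge hf hβ hγ]
  simp only [wedge₂₁, wedge, extD_eq_fderiv_sub hβ, extD_eq_fderiv_sub hγ]
  ring

lemma extD₂_const_mul_wedge (c : ℂ) (hβ : DifferentiableAt ℝ β x)
    (hγ : DifferentiableAt ℝ γ x) (u v w : E) :
    extD₂ (fun y v w => c * wedge (β y) (γ y) v w) x u v w =
      c * (wedge₂₁ (extD β x) (γ x) u v w - wedge₂₁ (extD γ x) (β x) u v w) := by
  rw [extD₂_mul_wedge (differentiableAt_const c) hβ hγ]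
  simp [wedge₂₁]

end Leibniz

end Calculus

section StructureEquations

variable {θ1 θ2 : E → E →L[ℝ] ℂ} {ψ : E → E →L[ℝ] ℝ} {T1 T2 : E → ℂ} {x : E}

theorem dStructureForm₁_eq_zero (hθ1 : ContDiffAt ℝ 2 θ1 x) (hθ2 : DifferentiableAt ℝ θ2 x)
    (hψ : DifferentiableAt ℝ ψ x)
    (heq1 : ∀ᶠ y in 𝓝 x, extD θ1 y = structureForm₁ (θ1 y) (θ2 y) (ψ y))
    (heq2 : extD θ2 x = structureForm₂ (θ1 x) (θ2 x) (ψ x) (T1 x) (T2 x)) (u v w : E) :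
    dStructureForm₁ (θ1 x) (θ2 x) (ψ x) (T1 x) (T2 x) (extD (fun y => realToC (ψ y)) x)
      u v w = 0 := by
  have hθ1' : DifferentiableAt ℝ θ1 x := hθ1.differentiableAt (by simp)
  have hform : (fun y => structureForm₁ (θ1 y) (θ2 y) (ψ y)) = fun y v w =>
      -I * wedge (realToC (ψ y)) (θ1 y) v w + 1 * wedge (conjForm (θ1 y)) (θ2 y) v w := by
    funext y v w
    rw [one_mul]
    rfl
  rw [← extD₂_extD hθ1 u v w, extD₂_congr heq1, hform,
    extD₂_add (differentiableAt_mul_wedge (differentiableAt_const _) hψ.realToC hθ1')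
      (differentiableAt_mul_wedge (differentiableAt_const _) hθ1'.conjForm hθ2),
    extD₂_const_mul_wedge _ hψ.realToC hθ1', extD₂_const_mul_wedge _ hθ1'.conjForm hθ2,
    extD_conjForm, heq1.self_of_nhds, heq2, one_mul]
  rfl

theorem dStructureForm₂_eq_zero (hθ1 : DifferentiableAt ℝ θ1 x) (hθ2 : ContDiffAt ℝ 2 θ2 x)
    (hψ : DifferentiableAt ℝ ψ x) (hT1 : DifferentiableAt ℝ T1 x)
    (hT2 : DifferentiableAt ℝ T2 x)
    (heq1 : extD θ1 x = structureForm₁ (θ1 x) (θ2 x) (ψ x))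
    (heq2 : ∀ᶠ y in 𝓝 x, extD θ2 y = structureForm₂ (θ1 y) (θ2 y) (ψ y) (T1 y) (T2 y))
    (u v w : E) :
    dStructureForm₂ (θ1 x) (θ2 x) (ψ x) (T1 x) (T2 x) (fderiv ℝ T1 x) (fderiv ℝ T2 x)
      (extD (fun y => realToC (ψ y)) x) u v w = 0 := by
  have hθ2' : DifferentiableAt ℝ θ2 x := hθ2.differentiableAt (by simp)
  have hψθ2 := differentiableAt_mul_wedge (differentiableAt_const (-2 * I)) hψ.realToC hθ2'
  have hθ1θ1 := differentiableAt_mul_wedge hT1 hθ1 hθ1.conjForm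
  have hθ1θ2 := differentiableAt_mul_wedge hT2 hθ1 hθ2'
  rw [← extD₂_extD hθ2 u v w, extD₂_congr heq2]
  change _ = extD₂ (fun y v w => -2 * I * wedge (realToC (ψ y)) (θ2 y) v w
    + T1 y * wedge (θ1 y) (conjForm (θ1 y)) v w + T2 y * wedge (θ1 y) (θ2 y) v w) x u v w
  rw [extD₂_add (fun v w => (hψθ2 v w).fun_add (hθ1θ1 v w)) hθ1θ2, extD₂_add hψθ2 hθ1θ1,
    extD₂_const_mul_wedge _ hψ.realToC hθ2', extD₂_mul_wedge hT1 hθ1 hθ1.conjForm,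
    extD₂_mul_wedge hT2 hθ1 hθ2', extD_conjForm, heq1, heq2.self_of_nhds]
  rfl

end StructureEquations

noncomputable def reImFrame (θ1 θ2 : E →L[ℝ] ℂ) (ψ : E →L[ℝ] ℝ) : Fin 5 → Dual ℝ E :=
  ![reLm ∘ₗ θ1, imLm ∘ₗ θ1, reLm ∘ₗ θ2, imLm ∘ₗ θ2, ψ]

lemma linearIndependent_reImFrame {θ1 θ2 : E →L[ℝ] ℂ} {ψ : E →L[ℝ] ℝ}
    (h : LinearIndependent ℂ ![θ1, θ2, conjForm θ1, conjForm θ2, realToC ψ]) :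
    LinearIndependent ℝ (reImFrame θ1 θ2 ψ) := by
  rw [Fintype.linearIndependent_iff] at h ⊢
  intro g hg
  have hc := h ![(g 0 - I * g 1) / 2, (g 2 - I * g 3) / 2, (g 0 + I * g 1) / 2,
    (g 2 + I * g 3) / 2, g 4] <| by
    ext v
    have hv := congrArg (fun φ : Dual ℝ E => (φ v : ℂ)) hg
    simp [Fin.sum_univ_five, reImFrame] at hv
    simp only [Fin.sum_univ_five, add_apply, smul_apply, Matrix.cons_val, conjForm_apply,
      realToC_apply, smul_eq_mul, zero_apply]
    rw [← re_add_im (θ1 v), ← re_add_im (θ2 v)]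
    simp only [map_add, map_mul, conj_ofReal, conj_I]
    linear_combination hv - ((g 1 : ℂ) * (θ1 v).im + (g 3 : ℂ) * (θ2 v).im) * I_sq
  have hre : ∀ a b : ℝ, (a : ℂ) - I * b = 0 → (a : ℂ) + I * b = 0 → a = 0 ∧ b = 0 :=
    fun a b h h' => ⟨by exact_mod_cast (by linear_combination (h + h') / 2 : (a : ℂ) = 0),
      by exact_mod_cast (by linear_combination (-I / 2) * (h' - h) + b * I_sq : (b : ℂ) = 0)⟩
  obtain ⟨g0, g1⟩ := hre _ _ (by simpa using hc 0) (by simpa using hc 2)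
  obtain ⟨g2, g3⟩ := hre _ _ (by simpa using hc 1) (by simpa using hc 3)
  have g4 : g 4 = 0 := by simpa using hc 4
  intro i
  fin_cases i <;> assumption

section DualFrame

variable {θ1 θ2 : E →L[ℝ] ℂ} {ψ : E →L[ℝ] ℝ} {e : Basis (Fin 5) ℝ E}

lemma apply_of_coord_eq (he : e.coord = reImFrame θ1 θ2 ψ) (v : E) :
    θ1 v = e.coord 0 v + e.coord 1 v * I ∧ θ2 v = e.coord 2 v + e.coord 3 v * I ∧
      (ψ v : ℂ) = e.coord 4 v := by
  simp [he, reImFrame, re_add_im]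

lemma apply_basis_of_coord_eq (he : e.coord = reImFrame θ1 θ2 ψ) (j : Fin 5) :
    θ1 (e j) = ![1, I, 0, 0, 0] j ∧ θ2 (e j) = ![0, 0, 1, I, 0] j ∧
      (ψ (e j) : ℂ) = ![0, 0, 0, 0, 1] j := by
  simp only [apply_of_coord_eq he, Basis.coord_apply, Basis.repr_self]
  fin_cases j <;> simp

/-- `e₂ + i e₃` pairs to zero with `θ¹, θ̄¹, θ²`, and `e₄` with all but `ψ`; so a covector
vanishing on both lies in the span of `θ¹, θ̄¹, θ²`. -/
lemma exists_eq_combination_of_coord_eq (he : e.coord = reImFrame θ1 θ2 ψ)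
    (l : E →L[ℝ] ℂ) (h3 : l (e 3) = I * l (e 2)) (h4 : l (e 4) = 0) :
    ∃ c1 c2 c3 : ℂ, ∀ v, l v = c1 * θ1 v + c2 * conj (θ1 v) + c3 * θ2 v := by
  refine ⟨(l (e 0) - I * l (e 1)) / 2, (l (e 0) + I * l (e 1)) / 2, l (e 2), fun v => ?_⟩
  obtain ⟨h1v, h2v, -⟩ := apply_of_coord_eq he v
  conv_lhs => rw [← e.sum_repr v]
  simp only [map_smul, Fin.sum_univ_five, h3, h4, h1v, h2v, map_add, map_mul, conj_ofReal,
    conj_I, Complex.real_smul, Basis.coord_apply]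
  linear_combination (e.repr v 1 * l (e 1) : ℂ) * I_sq

end DualFrame

section Bianchi

variable {θ1 θ2 : E →L[ℝ] ℂ} {ψ : E →L[ℝ] ℝ} {e : Basis (Fin 5) ℝ E} {T1 T2 : ℂ}
  {dT1 dT2 : E →L[ℝ] ℂ} {Ψ : E → E → ℂ}

lemma bianchi₁_of_coord_eq (he : e.coord = reImFrame θ1 θ2 ψ)
    (h2 : ∀ u v w, dStructureForm₂ θ1 θ2 ψ T1 T2 dT1 dT2 Ψ u v w = 0) :
    let l := dT1 + (2 * I * T1) • realToC ψ
    l (e 3) = I * l (e 2) ∧ l (e 4) = 0 := by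
  have hb := apply_basis_of_coord_eq he
  have h012 := h2 (e 0) (e 1) (e 2)
  have h013 := h2 (e 0) (e 1) (e 3)
  have h014 := h2 (e 0) (e 1) (e 4)
  simp only [dStructureForm₂, wedge₂₁, wedge, structureForm₁, structureForm₂, conjForm_apply,
    realToC_apply, (hb _).1, (hb _).2.1, (hb _).2.2, Matrix.cons_val, map_mul, map_neg,
    map_zero, map_one, conj_I, mul_zero, zero_mul, sub_zero, zero_sub, add_zero,
    zero_add, mul_one, one_mul, sub_self] at h012 h013 h014
  simp only [add_apply, smul_apply, realToC_apply, (hb _).2.2, Matrix.cons_val, smul_eq_mul]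
  constructor
  · linear_combination (I / 2) * (h013 - I * h012) + (dT1 (e 3) - I * dT1 (e 2)) * I_sq
  · linear_combination (I / 2) * h014 + (dT1 (e 4) + 2 * I * T1) * I_sq

/-- `d(dθ¹) = 0` on `(e₀, e₂, e₁)`, `(e₀, e₃, e₁)`, `(e₀, e₄, e₁)` and its conjugate determine
the components of `dψ = Ψ` that enter `d(dθ²) = 0` on `(e₀, e₂, e₃)` and `(e₀, e₂, e₄)`. -/
lemma bianchi₂_of_coord_eq (he : e.coord = reImFrame θ1 θ2 ψ)
    (hΨ_real : ∀ v w, conj (Ψ v w) = Ψ v w) (hΨ_swap : ∀ v w, Ψ w v = -Ψ v w)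
    (h1 : ∀ u v w, dStructureForm₁ θ1 θ2 ψ T1 T2 Ψ u v w = 0)
    (h2 : ∀ u v w, dStructureForm₂ θ1 θ2 ψ T1 T2 dT1 dT2 Ψ u v w = 0) :
    let l := dT2 - (2 * conj T2) • conjForm θ2 - (I * T2) • realToC ψ
    l (e 3) = I * l (e 2) ∧ l (e 4) = 0 := by
  have hb := apply_basis_of_coord_eq he
  have h023 := h2 (e 0) (e 2) (e 3)
  have h024 := h2 (e 0) (e 2) (e 4)
  have h021 := h1 (e 0) (e 2) (e 1)
  have h031 := h1 (e 0) (e 3) (e 1)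
  have h041 := h1 (e 0) (e 4) (e 1)
  simp only [dStructureForm₁, dStructureForm₂, wedge₂₁, wedge, structureForm₁, structureForm₂,
    conjForm_apply, realToC_apply, (hb _).1, (hb _).2.1, (hb _).2.2, Matrix.cons_val, map_mul,
    map_neg, map_zero, map_one, conj_I, mul_zero, zero_mul, sub_zero, zero_sub, add_zero,
    zero_add, mul_one, one_mul, sub_self, hΨ_swap (e 0) (e 3), hΨ_swap (e 0) (e 4)]
    at h023 h024 h021 h031 h041
  have h021c := congrArg conj h021
  have h031c := congrArg conj h031
  have h041c := congrArg conj h041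
  simp only [map_add, map_mul, map_neg, map_zero, conj_I, hΨ_real] at h021c h031c h041c
  simp only [sub_apply, smul_apply, conjForm_apply, realToC_apply, (hb _).2.1, (hb _).2.2,
    Matrix.cons_val, smul_eq_mul, map_one, map_zero, conj_I]
  constructor
  · linear_combination h023 - (h021 + h021c) - I * (h031 + h031c)
      + 2 * I * (conj T2 + T2 - Ψ (e 0) (e 3)) * I_sq
  · linear_combination h024 - I * (h041 + h041c) - 2 * I * Ψ (e 0) (e 4) * I_sq

theorem bianchi_of_dStructureForm_eq_zero [FiniteDimensional ℝ E] (hE : finrank ℝ E = 5)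
    (hind : LinearIndependent ℂ ![θ1, θ2, conjForm θ1, conjForm θ2, realToC ψ])
    (hΨ_real : ∀ v w, conj (Ψ v w) = Ψ v w) (hΨ_swap : ∀ v w, Ψ w v = -Ψ v w)
    (h1 : ∀ u v w, dStructureForm₁ θ1 θ2 ψ T1 T2 Ψ u v w = 0)
    (h2 : ∀ u v w, dStructureForm₂ θ1 θ2 ψ T1 T2 dT1 dT2 Ψ u v w = 0) :
    (∃ c1 c2 c3 : ℂ, ∀ v,
      dT1 v + 2 * I * T1 * ψ v = c1 * θ1 v + c2 * conj (θ1 v) + c3 * θ2 v) ∧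
    (∃ c1 c2 c3 : ℂ, ∀ v, dT2 v - 2 * conj T2 * conj (θ2 v) - I * T2 * ψ v
      = c1 * θ1 v + c2 * conj (θ1 v) + c3 * θ2 v) := by
  obtain ⟨e, he⟩ := exists_basis_coord_eq (linearIndependent_reImFrame hind) (by simp [hE])
  obtain ⟨hA3, hA4⟩ := bianchi₁_of_coord_eq he h2
  obtain ⟨hB3, hB4⟩ := bianchi₂_of_coord_eq he hΨ_real hΨ_swap h1 h2
  obtain ⟨a1, a2, a3, ha⟩ := exists_eq_combination_of_coord_eq he _ hA3 hA4
  obtain ⟨b1, b2, b3, hb⟩ := exists_eq_combination_of_coord_eq he _ hB3 hB4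
  refine ⟨⟨a1, a2, a3, fun v => ?_⟩, ⟨b1, b2, b3, fun v => ?_⟩⟩
  · simpa [mul_assoc] using ha v
  · simpa [mul_assoc] using hb v

end Bianchi

theorem bianchi_of_structure_equations [FiniteDimensional ℝ E] (hE : finrank ℝ E = 5)
    {θ1 θ2 : E → E →L[ℝ] ℂ} {ψ : E → E →L[ℝ] ℝ} {T1 T2 : E → ℂ} {x : E}
    (hθ1 : ContDiffAt ℝ 2 θ1 x) (hθ2 : ContDiffAt ℝ 2 θ2 x) (hψ : DifferentiableAt ℝ ψ x)
    (hT1 : DifferentiableAt ℝ T1 x) (hT2 : DifferentiableAt ℝ T2 x)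
    (hind : LinearIndependent ℂ ![θ1 x, θ2 x, conjForm (θ1 x), conjForm (θ2 x), realToC (ψ x)])
    (heq1 : ∀ᶠ y in 𝓝 x, extD θ1 y = structureForm₁ (θ1 y) (θ2 y) (ψ y))
    (heq2 : ∀ᶠ y in 𝓝 x, extD θ2 y = structureForm₂ (θ1 y) (θ2 y) (ψ y) (T1 y) (T2 y)) :
    (∃ c1 c2 c3 : ℂ, ∀ v, fderiv ℝ T1 x v + 2 * I * T1 x * ψ x v
      = c1 * θ1 x v + c2 * conj (θ1 x v) + c3 * θ2 x v) ∧
    (∃ c1 c2 c3 : ℂ, ∀ v, fderiv ℝ T2 x v - 2 * conj (T2 x) * conj (θ2 x v) - I * T2 x * ψ x v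
      = c1 * θ1 x v + c2 * conj (θ1 x v) + c3 * θ2 x v) :=
  bianchi_of_dStructureForm_eq_zero hE hind (conj_extD_realToC ψ x) (extD_swap _ x)
    (dStructureForm₁_eq_zero hθ1 (hθ2.differentiableAt (by simp)) hψ heq1 heq2.self_of_nhds)
    (dStructureForm₂_eq_zero (hθ1.differentiableAt (by simp)) hθ2 hψ hT1 hT2
      heq1.self_of_nhds heq2)

end ComplexForms

/-- The Bianchi-type identities for the curvature functions `T₁, T₂`:
`(dT₁ + 2iT₁ψ) ∧ θ¹ ∧ θ̄¹ ∧ θ² = 0` and `(dT₂ − 2T̄₂θ̄² − iT₂ψ) ∧ θ¹ ∧ θ̄¹ ∧ θ² = 0`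
(wedges of four 1-forms expressed as 4×4 determinants), equivalently these combinations
are pointwise ℂ-linear combinations of `θ¹, θ̄¹, θ²`. -/
theorem stmt14 (U : Set (Fin 5 → ℝ)) (hU : IsOpen U)
    (θ1 θ2 : (Fin 5 → ℝ) → (Fin 5 → ℝ) →L[ℝ] ℂ)
    (ψ : (Fin 5 → ℝ) → (Fin 5 → ℝ) →L[ℝ] ℝ)
    (hθ1 : ContDiffOn ℝ (⊤ : ℕ∞) θ1 U) (hθ2 : ContDiffOn ℝ (⊤ : ℕ∞) θ2 U)
    (hψ : ContDiffOn ℝ (⊤ : ℕ∞) ψ U)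
    (hindep : ∀ x ∈ U, LinearIndependent ℂ
      ![θ1 x, θ2 x, conjForm (θ1 x), conjForm (θ2 x), realToC (ψ x)])
    (T1 T2 : (Fin 5 → ℝ) → ℂ)
    (hT1 : ContDiffOn ℝ (⊤ : ℕ∞) T1 U) (hT2 : ContDiffOn ℝ (⊤ : ℕ∞) T2 U)
    (heq1 : ∀ x ∈ U, ∀ v w, extD θ1 x v w =
      -Complex.I * (((ψ x v : ℝ) : ℂ) * θ1 x w - ((ψ x w : ℝ) : ℂ) * θ1 x v)
      + ((starRingEnd ℂ) (θ1 x v) * θ2 x w - (starRingEnd ℂ) (θ1 x w) * θ2 x v))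
    (heq2 : ∀ x ∈ U, ∀ v w, extD θ2 x v w =
      -2 * Complex.I * (((ψ x v : ℝ) : ℂ) * θ2 x w - ((ψ x w : ℝ) : ℂ) * θ2 x v)
      + T1 x * (θ1 x v * (starRingEnd ℂ) (θ1 x w) - θ1 x w * (starRingEnd ℂ) (θ1 x v))
      + T2 x * (θ1 x v * θ2 x w - θ1 x w * θ2 x v))
    (A B : (Fin 5 → ℝ) → (Fin 5 → ℝ) → ℂ)
    (hA : ∀ x v, A x v = fderiv ℝ T1 x v + 2 * Complex.I * T1 x * ((ψ x v : ℝ) : ℂ))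
    (hB : ∀ x v, B x v = fderiv ℝ T2 x v
      - 2 * (starRingEnd ℂ) (T2 x) * (starRingEnd ℂ) (θ2 x v)
      - Complex.I * T2 x * ((ψ x v : ℝ) : ℂ)) :
    (∀ x ∈ U, ∀ v1 v2 v3 v4 : Fin 5 → ℝ,
      Matrix.det (Matrix.of fun (i : Fin 4) (j : Fin 4) =>
        ![A x, fun v => θ1 x v, fun v => (starRingEnd ℂ) (θ1 x v), fun v => θ2 x v] i
          (![v1, v2, v3, v4] j)) = 0) ∧
    (∀ x ∈ U, ∀ v1 v2 v3 v4 : Fin 5 → ℝ,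
      Matrix.det (Matrix.of fun (i : Fin 4) (j : Fin 4) =>
        ![B x, fun v => θ1 x v, fun v => (starRingEnd ℂ) (θ1 x v), fun v => θ2 x v] i
          (![v1, v2, v3, v4] j)) = 0) ∧
    (∀ x ∈ U, ∃ c1 c2 c3 : ℂ, ∀ v,
      A x v = c1 * θ1 x v + c2 * (starRingEnd ℂ) (θ1 x v) + c3 * θ2 x v) ∧
    (∀ x ∈ U, ∃ c1 c2 c3 : ℂ, ∀ v,
      B x v = c1 * θ1 x v + c2 * (starRingEnd ℂ) (θ1 x v) + c3 * θ2 x v) := by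
  have key : ∀ x ∈ U,
      (∃ c1 c2 c3 : ℂ, ∀ v, A x v = c1 * θ1 x v + c2 * conj (θ1 x v) + c3 * θ2 x v) ∧
      (∃ c1 c2 c3 : ℂ, ∀ v, B x v = c1 * θ1 x v + c2 * conj (θ1 x v) + c3 * θ2 x v) := by
    intro x hx
    have hxU : U ∈ 𝓝 x := hU.mem_nhds hx
    have h2 : ((2 : ℕ∞) : WithTop ℕ∞) ≤ ((⊤ : ℕ∞) : WithTop ℕ∞) := by exact_mod_cast le_top
    simp only [hA, hB]
    exact ComplexForms.bianchi_of_structure_equations (by simp)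
      ((hθ1.contDiffAt hxU).of_le h2) ((hθ2.contDiffAt hxU).of_le h2)
      ((hψ.contDiffAt hxU).differentiableAt (by simp))
      ((hT1.contDiffAt hxU).differentiableAt (by simp))
      ((hT2.contDiffAt hxU).differentiableAt (by simp)) (hindep x hx)
      (eventually_of_mem hxU fun y hy => funext₂ (heq1 y hy))
      (eventually_of_mem hxU fun y hy => funext₂ (heq2 y hy))
  refine ⟨fun x hx => ?_, fun x hx => ?_, fun x hx => (key x hx).1, fun x hx => (key x hx).2⟩
  · obtain ⟨c1, c2, c3, hc⟩ := (key x hx).1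
    exact Matrix.det_evaluation_eq_zero_of_eq_combination hc
  · obtain ⟨c1, c2, c3, hc⟩ := (key x hx).2
    exact Matrix.det_evaluation_eq_zero_of_eq_combination hc
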